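/- arXiv:1808.01212 — 5 statements merged into one kernel-verified Lean document; each statement's English description precedes it below -/
import Mathlib

section
/- For every t ∈ G, the linear span of the set of functions of the form 1_t · 1_{r_1^{i_1}} ⋯ 1_{r_m^{i_m}} (with m ≥ 0 and (r_1,i_1), …, (r_m,i_m) ∈ G × I), restricted to X_t, is a dense *-subalgebra of C(X_t, ℂ). -/
/-- The space `X_G`: subsets `ξ` of `G × I` (with `I = J ⊔ {0}` realized as `Option J`,
`none` playing the role of `0`), identified with points of `{0,1}^(G × I)` with the
product topology, such that `(e, 0) ∈ ξ` and `(r, i) ∈ ξ` implies `(r, 0) ∈ ξ`. -/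
def XG (G : Type*) [Group G] (J : Type*) : Set ((G × Option J) → Bool) :=
  {ξ | ξ (1, none) = true ∧ ∀ (r : G) (i : Option J), ξ (r, i) = true → ξ (r, none) = true}

/-- For `t ∈ G`, the set `X_t = { ξ ∈ X_G : (t,0) ∈ ξ }`; it is clopen in the compact
Hausdorff space `X_G`, hence compact. -/
def Xt {G : Type*} [Group G] {J : Type*} (t : G) : Set ((G × Option J) → Bool) :=
  {ξ | ξ ∈ XG G J ∧ ξ (t, none) = true}

/-- The restriction to `X_t` of the characteristic function `1_{r^i} : ξ ↦ [ (r,i) ∈ ξ ]`,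
for `x = (r, i) ∈ G × I`, as an element of `C(X_t, ℂ)`. -/
noncomputable def chiXt {G : Type*} [Group G] {J : Type*} (t : G) (x : G × Option J) :
    C(Xt (J := J) t, ℂ) :=
  ⟨fun ξ => if (ξ : (G × Option J) → Bool) x = true then 1 else 0, by
    have h1 : Continuous fun ξ : Xt (J := J) t => (ξ : (G × Option J) → Bool) x :=
      (continuous_apply x).comp continuous_subtype_val
    exact (continuous_of_discreteTopology
      (f := fun b : Bool => if b = true then (1 : ℂ) else 0)).comp h1⟩

/-!
The span of all finite products of the functions `1_{r^i}` is the subalgebra they generate, and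
since these functions are real-valued it is even the star subalgebra they generate. Two distinct
points of `X_t` differ in some coordinate `(r, i)`, which `1_{r^i}` detects, so this star subalgebra
separates points; `X_t` is closed in the compact space `{0,1}^(G × I)`, and the Stone–Weierstrass
theorem gives density.
-/

open Set Submodule

theorem Algebra.span_setOf_list_prod_eq_adjoin {R A ι : Type*} [CommSemiring R] [Semiring A]
    [Algebra R A] (f : ι → A) :
    span R {a | ∃ l : List ι, a = (l.map f).prod} =
      Subalgebra.toSubmodule (Algebra.adjoin R (range f)) := by
  rw [Algebra.adjoin_eq_span, ← FreeMonoid.mrange_lift, MonoidHom.coe_mrange]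
  congr 1
  ext a
  simp only [mem_ofPred_eq, mem_range, FreeMonoid.lift_apply, eq_comm (a := a)]
  exact FreeMonoid.toList.surjective.exists

theorem StarAlgebra.adjoin_toSubalgebra_of_isSelfAdjoint {R A : Type*} [CommSemiring R]
    [StarRing R] [Semiring A] [StarRing A] [Algebra R A] [StarModule R A] {s : Set A}
    (hs : ∀ a ∈ s, IsSelfAdjoint a) :
    (StarAlgebra.adjoin R s).toSubalgebra = Algebra.adjoin R s := by
  rw [StarAlgebra.adjoin_toSubalgebra, union_eq_left.mpr]
  intro a (ha : star a ∈ s)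
  rw [← star_star a, (hs _ ha).star_eq]
  exact ha

section Xt

variable {G : Type*} [Group G] {J : Type*} (t : G)

theorem isClosed_Xt : IsClosed (Xt (J := J) t) := by
  have isClosed_eval (x : G × Option J) : IsClosed {ξ : (G × Option J) → Bool | ξ x = true} :=
    isClosed_eq (continuous_apply x) continuous_const
  have isClosed_imp (x y : G × Option J) :
      IsClosed {ξ : (G × Option J) → Bool | ξ x = true → ξ y = true} :=
    (isClosed_discrete {p : Bool × Bool | p.1 = true → p.2 = true}).preimage
      (f := fun ξ : (G × Option J) → Bool => (ξ x, ξ y)) (by fun_prop)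
  simp only [Xt, XG, ofPred_and, ofPred_forall]
  exact ((isClosed_eval _).inter (isClosed_iInter fun r => isClosed_iInter fun i =>
    isClosed_imp _ _)).inter (isClosed_eval _)

instance : CompactSpace (Xt (J := J) t) :=
  isCompact_iff_compactSpace.mp (isClosed_Xt t).isCompact

theorem isSelfAdjoint_chiXt (x : G × Option J) : IsSelfAdjoint (chiXt t x) := by
  ext ξ
  simp only [ContinuousMap.star_apply, chiXt, ContinuousMap.coe_mk]
  split_ifs <;> simp

theorem separatesPoints_adjoin_chiXt :
    (StarAlgebra.adjoin ℂ (range (chiXt (J := J) t))).SeparatesPoints := by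
  intro ξ η hne
  obtain ⟨x, hx⟩ : ∃ x, (ξ : (G × Option J) → Bool) x ≠ (η : (G × Option J) → Bool) x := by
    by_contra! h
    exact hne (Subtype.ext (funext h))
  refine ⟨_, ⟨chiXt t x, StarAlgebra.subset_adjoin ℂ _ ⟨x, rfl⟩, rfl⟩, ?_⟩
  simp only [chiXt, ContinuousMap.coe_mk]
  cases hξ : (ξ : (G × Option J) → Bool) x <;> cases hη : (η : (G × Option J) → Bool) x <;>
    simp_all

theorem span_list_prod_chiXt_eq_adjoin :
    span ℂ {f : C(Xt (J := J) t, ℂ) | ∃ l : List (G × Option J), f = (l.map (chiXt t)).prod} =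
      Subalgebra.toSubmodule (StarAlgebra.adjoin ℂ (range (chiXt (J := J) t))).toSubalgebra := by
  rw [StarAlgebra.adjoin_toSubalgebra_of_isSelfAdjoint
    (forall_mem_range.mpr (isSelfAdjoint_chiXt t)), Algebra.span_setOf_list_prod_eq_adjoin]

end Xt

/-- For every `t ∈ G`, the linear span of the set of functions of the form
`1_t · 1_{r_1^{i_1}} ⋯ 1_{r_m^{i_m}}` (with `m ≥ 0`), restricted to `X_t` (where the
restriction of `1_t` is the constant `1`, so these restrictions are exactly the finite
products of the `chiXt t x`), is a dense *-subalgebra of `C(X_t, ℂ)`: it contains `1`,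
is closed under multiplication and under `star`, and is dense. -/
theorem span_products_dense (G : Type*) [Group G] (J : Type*) (t : G) :
    (1 : C(Xt (J := J) t, ℂ)) ∈
      Submodule.span ℂ {f : C(Xt (J := J) t, ℂ) |
        ∃ l : List (G × Option J), f = (l.map (chiXt t)).prod} ∧
    (∀ f g : C(Xt (J := J) t, ℂ),
      f ∈ Submodule.span ℂ {f : C(Xt (J := J) t, ℂ) |
          ∃ l : List (G × Option J), f = (l.map (chiXt t)).prod} →
      g ∈ Submodule.span ℂ {f : C(Xt (J := J) t, ℂ) |
          ∃ l : List (G × Option J), f = (l.map (chiXt t)).prod} →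
      f * g ∈ Submodule.span ℂ {f : C(Xt (J := J) t, ℂ) |
          ∃ l : List (G × Option J), f = (l.map (chiXt t)).prod}) ∧
    (∀ f : C(Xt (J := J) t, ℂ),
      f ∈ Submodule.span ℂ {f : C(Xt (J := J) t, ℂ) |
          ∃ l : List (G × Option J), f = (l.map (chiXt t)).prod} →
      star f ∈ Submodule.span ℂ {f : C(Xt (J := J) t, ℂ) |
          ∃ l : List (G × Option J), f = (l.map (chiXt t)).prod}) ∧
    Dense ((Submodule.span ℂ {f : C(Xt (J := J) t, ℂ) |
        ∃ l : List (G × Option J), f = (l.map (chiXt t)).prod} : Submodule ℂ _) :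
          Set C(Xt (J := J) t, ℂ)) := by
  rw [span_list_prod_chiXt_eq_adjoin]
  set A := StarAlgebra.adjoin ℂ (range (chiXt (J := J) t))
  refine ⟨A.one_mem, fun f g => A.mul_mem, fun f => A.star_mem', ?_⟩
  change Dense (A : Set C(Xt (J := J) t, ℂ))
  rw [dense_iff_closure_eq, ← StarSubalgebra.topologicalClosure_coe,
    ContinuousMap.starSubalgebra_topologicalClosure_eq_top_of_separatesPoints A
      (separatesPoints_adjoin_chiXt t)]
  rfl
end

section
/- Let A be a unital C*-algebra, π : G → A a partial representation, and {P_i}_{i ∈ J} projections in A such that π(r)π(r)* commutes with π(s)P_jπ(s)* for all r, s ∈ G and j ∈ J, and π(r)P_iπ(r)* commutes with π(s)P_jπ(s)* for all r, s ∈ G and i, j ∈ J. Then there exists a unital *-homomorphism φ : C(X_G, ℂ) → A such that φ(1_{(r,i)}) = π(r) P_i π(r)* for all r ∈ G and i ∈ J, and φ(1_{(r,0)}) = π(r) π(r)* for all r ∈ G. -/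
/-- The characteristic function `1_{r^i} : ξ ↦ [ (r,i) ∈ ξ ]`, for `x = (r, i) ∈ G × I`,
as an element of `C(X_G, ℂ)`. -/
noncomputable def chiG {G : Type*} [Group G] {J : Type*} (x : G × Option J) :
    C(XG G J, ℂ) :=
  ⟨fun ξ => if (ξ : (G × Option J) → Bool) x = true then 1 else 0, by
    have h1 : Continuous fun ξ : XG G J => (ξ : (G × Option J) → Bool) x :=
      (continuous_apply x).comp continuous_subtype_val
    exact (continuous_of_discreteTopology
      (f := fun b : Bool => if b = true then (1 : ℂ) else 0)).comp h1⟩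

open WeakDual

section CommutingProjections

variable {ι : Type*}

def coordIndicator (X : Set (ι → Bool)) (x : ι) : C(X, ℂ) :=
  ⟨fun ξ => if (ξ : ι → Bool) x = true then 1 else 0,
    (continuous_of_discreteTopology (f := fun b : Bool => if b = true then (1 : ℂ) else 0)).comp
      ((continuous_apply x).comp continuous_subtype_val)⟩

/-- `e x * e y = e y` says that the projection `e y` lies below `e x`. -/
def orderCompatiblePoints {R : Type*} [Monoid R] (e : ι → R) : Set (ι → Bool) :=
  {ξ | (∀ x, e x = 1 → ξ x = true) ∧
    ∀ x y, e x * e y = e y → ξ y = true → ξ x = true}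

section Character

variable {B : Type*} [Ring B] [TopologicalSpace B] [Algebra ℂ B]

lemma IsIdempotentElem.characterSpace_apply_eq_zero_or_one {p : B} (hp : IsIdempotentElem p)
    (χ : characterSpace ℂ B) : χ p = 0 ∨ χ p = 1 :=
  IsIdempotentElem.iff_eq_zero_or_one.mp (hp.map χ)

noncomputable def characterPoint (e : ι → B) (χ : characterSpace ℂ B) : ι → Bool :=
  fun x => decide (χ (e x) = 1)

lemma characterPoint_mem_orderCompatiblePoints (e : ι → B) (χ : characterSpace ℂ B) :
    characterPoint e χ ∈ orderCompatiblePoints e := by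
  refine ⟨fun x hx => by simp [characterPoint, hx], fun x y hxy hy => ?_⟩
  have hχ := congrArg χ hxy
  simp only [characterPoint, decide_eq_true_eq] at hy ⊢
  rwa [map_mul, hy, mul_one] at hχ

lemma continuous_characterPoint {e : ι → B} (he : ∀ x, IsIdempotentElem (e x)) :
    Continuous (characterPoint e) := by
  refine continuous_pi fun x => (continuous_bool_rng true).mpr ?_
  have hev : Continuous fun χ : characterSpace ℂ B => χ (e x) :=
    (eval_continuous (e x)).comp continuous_subtype_val
  have hclosed : (characterPoint e · x) ⁻¹' {true} = (· (e x)) ⁻¹' {1} := by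
    ext χ; simp [characterPoint]
  have hopen : (characterPoint e · x) ⁻¹' {true} = (· (e x)) ⁻¹' {0}ᶜ := by
    ext χ
    rcases (he x).characterSpace_apply_eq_zero_or_one χ with h | h <;>
      simp [characterPoint, h]
  exact ⟨hclosed ▸ isClosed_singleton.preimage hev, hopen ▸ isOpen_compl_singleton.preimage hev⟩

lemma coordIndicator_characterPoint {e : ι → B} (he : ∀ x, IsIdempotentElem (e x))
    {X : Set (ι → Bool)} (χ : characterSpace ℂ B) (hχ : characterPoint e χ ∈ X) (x : ι) :
    coordIndicator X x ⟨characterPoint e χ, hχ⟩ = χ (e x) := by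
  rcases (he x).characterSpace_apply_eq_zero_or_one χ with h | h <;>
    simp [coordIndicator, characterPoint, h]

end Character

theorem exists_starAlgHom_coordIndicator_of_isIdempotentElem {B : Type*} [CommCStarAlgebra B]
    {e : ι → B} (he : ∀ x, IsIdempotentElem (e x)) {X : Set (ι → Bool)}
    (hX : orderCompatiblePoints e ⊆ X) :
    ∃ φ : C(X, ℂ) →⋆ₐ[ℂ] B, ∀ x, φ (coordIndicator X x) = e x := by
  let T : C(characterSpace ℂ B, X) :=
    ⟨fun χ => ⟨characterPoint e χ, hX (characterPoint_mem_orderCompatiblePoints e χ)⟩,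
      (continuous_characterPoint he).subtype_mk _⟩
  refine ⟨(StarAlgHomClass.toStarAlgHom (gelfandStarTransform B).symm).comp
    (ContinuousMap.compStarAlgHom' ℂ ℂ T), fun x => ?_⟩
  have hT : (coordIndicator X x).comp T = gelfandStarTransform B (e x) := by
    ext χ
    exact coordIndicator_characterPoint he χ _ x
  simp [hT]

open scoped IsMulCommutative in
theorem exists_starAlgHom_coordIndicator_of_commute {A : Type*} [CStarAlgebra A] {e : ι → A}
    (he : ∀ x, IsStarProjection (e x)) (hcomm : ∀ x y, Commute (e x) (e y))
    {X : Set (ι → Bool)} (hX : orderCompatiblePoints e ⊆ X) :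
    ∃ φ : C(X, ℂ) →⋆ₐ[ℂ] A, ∀ x, φ (coordIndicator X x) = e x := by
  let S := StarAlgebra.adjoin ℂ (Set.range e)
  have : IsMulCommutative S := StarAlgebra.isMulCommutative_adjoin ℂ
    (by rintro _ ⟨x, rfl⟩ _ ⟨y, rfl⟩; exact hcomm x y)
    (by rintro _ ⟨x, rfl⟩ _ ⟨y, rfl⟩; rw [(he y).isSelfAdjoint.star_eq]; exact hcomm x y)
  let _ : CommSemiring S.topologicalClosure := S.commSemiringTopologicalClosure mul_comm
  let _ : CommCStarAlgebra S.topologicalClosure := { }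
  let eB : ι → S.topologicalClosure := fun x =>
    ⟨e x, S.le_topologicalClosure (StarAlgebra.subset_adjoin ℂ _ ⟨x, rfl⟩)⟩
  have hpoints : orderCompatiblePoints eB = orderCompatiblePoints e := by
    simp [orderCompatiblePoints, eB, Subtype.ext_iff]
  have heB : ∀ x, IsIdempotentElem (eB x) := fun x => Subtype.ext (he x).isIdempotentElem
  obtain ⟨φ, hφ⟩ := exists_starAlgHom_coordIndicator_of_isIdempotentElem heB (hpoints ▸ hX)
  exact ⟨S.topologicalClosure.subtype.comp φ, fun x => congrArg Subtype.val (hφ x)⟩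

end CommutingProjections

lemma IsStarProjection.mul_mul_star_of_commute {R : Type*} [Monoid R] [StarMul R] {v p : R}
    (hp : IsStarProjection p) (hv : v * star v * v = v) (hc : Commute (star v * v) p) :
    IsStarProjection (v * p * star v) := by
  refine ⟨?_, hp.isSelfAdjoint.conjugate v⟩
  calc v * p * star v * (v * p * star v) = v * (p * (star v * v)) * p * star v := by
        simp only [mul_assoc]
    _ = v * star v * v * (p * p) * star v := by rw [← hc.eq]; simp only [mul_assoc]
    _ = v * p * star v := by rw [hv, hp.isIdempotentElem.eq]

structure IsPartialRepresentation {G A : Type*} [Group G] [Monoid A] [StarMul A] (π : G → A) :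
    Prop where
  map_one : π 1 = 1
  map_inv : ∀ g, π g⁻¹ = star (π g)
  map_mul_mul_inv : ∀ g h, π g * π h * π h⁻¹ = π (g * h) * π h⁻¹

namespace IsPartialRepresentation

variable {G A : Type*} [Group G] [Monoid A] [StarMul A] {π : G → A}

lemma mul_star_mul_self (hπ : IsPartialRepresentation π) (g : G) :
    π g * star (π g) * π g = π g := by
  simpa [hπ.map_one, hπ.map_inv] using hπ.map_mul_mul_inv g g⁻¹

lemma mul_mul_star_eq (hπ : IsPartialRepresentation π) (g h : G) :
    π g * (π h * star (π h)) = π (g * h) * star (π (g * h)) * π g := by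
  have h₁ := hπ.map_mul_mul_inv g h
  have h₂ := congrArg star (hπ.map_mul_mul_inv g⁻¹ (g * h))
  simp only [inv_mul_cancel_left, star_mul, hπ.map_inv, star_star, mul_assoc] at h₁ h₂
  rw [h₁, mul_assoc, h₂]

lemma commute_mul_star (hπ : IsPartialRepresentation π) (g h : G) :
    Commute (π g * star (π g)) (π h * star (π h)) := by
  -- `e_g e_h = π(g) e_{g⁻¹h} π(g)*` is self-adjoint.
  refine ((IsSelfAdjoint.mul_star_self _).commute_iff (.mul_star_self _)).mpr ?_
  have h' := hπ.mul_mul_star_eq g⁻¹ h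
  rw [hπ.map_inv] at h'
  rw [mul_assoc, h']
  simpa only [mul_assoc] using (IsSelfAdjoint.mul_star_self (π (g⁻¹ * h))).conjugate (π g)

end IsPartialRepresentation

section PartialRepresentationProjections

variable {G J A : Type*} [Group G] [Monoid A] [StarMul A]

def conjProjection (π : G → A) (P : J → A) : G × Option J → A
  | (r, none) => π r * star (π r)
  | (r, some i) => π r * P i * star (π r)

variable {π : G → A} {P : J → A}

lemma IsPartialRepresentation.isStarProjection_conjProjection (hπ : IsPartialRepresentation π)
    (hP : ∀ i, IsStarProjection (P i)) (hPπ : ∀ r i, Commute (star (π r) * π r) (P i)) :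
    ∀ x, IsStarProjection (conjProjection π P x)
  | (r, none) => by
    simpa [conjProjection] using
      (IsStarProjection.one A).mul_mul_star_of_commute (hπ.mul_star_mul_self r) (.one_right _)
  | (r, some i) => (hP i).mul_mul_star_of_commute (hπ.mul_star_mul_self r) (hPπ r i)

lemma IsPartialRepresentation.commute_conjProjection (hπ : IsPartialRepresentation π)
    (hcomm₁ : ∀ r s j, Commute (π r * star (π r)) (π s * P j * star (π s)))
    (hcomm₂ : ∀ r s i j, Commute (π r * P i * star (π r)) (π s * P j * star (π s))) :
    ∀ x y, Commute (conjProjection π P x) (conjProjection π P y)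
  | (r, none), (s, none) => hπ.commute_mul_star r s
  | (r, none), (s, some j) => hcomm₁ r s j
  | (r, some i), (s, none) => (hcomm₁ s r i).symm
  | (r, some i), (s, some j) => hcomm₂ r s i j

lemma IsPartialRepresentation.conjProjection_none_mul (hπ : IsPartialRepresentation π)
    (P : J → A) (r : G) (i : Option J) :
    conjProjection π P (r, none) * conjProjection π P (r, i) = conjProjection π P (r, i) := by
  cases i <;> simp only [conjProjection, ← mul_assoc, hπ.mul_star_mul_self]

lemma IsPartialRepresentation.orderCompatiblePoints_conjProjection_subset
    (hπ : IsPartialRepresentation π) (P : J → A) :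
    orderCompatiblePoints (conjProjection π P) ⊆ XG G J := by
  rintro ξ ⟨hone, hle⟩
  refine ⟨hone _ ?_, fun r i => hle _ _ (hπ.conjProjection_none_mul P r i)⟩
  simp [conjProjection, hπ.map_one]

end PartialRepresentationProjections

/-- Let `A` be a unital C*-algebra, `π : G → A` a partial representation (`π(e) = 1`,
`π(g⁻¹) = π(g)*`, `π(g)π(h)π(h⁻¹) = π(gh)π(h⁻¹)`), and `{P_i}_{i ∈ J}` projections in `A`
such that `π(r)π(r)*` commutes with `π(s)P_jπ(s)*` for all `r, s ∈ G`, `j ∈ J`, and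
`π(r)P_iπ(r)*` commutes with `π(s)P_jπ(s)*` for all `r, s ∈ G`, `i, j ∈ J`.  Then there
exists a unital *-homomorphism `φ : C(X_G, ℂ) → A` such that
`φ(1_{(r,i)}) = π(r) P_i π(r)*` for all `r ∈ G`, `i ∈ J`, and
`φ(1_{(r,0)}) = π(r) π(r)*` for all `r ∈ G`. -/
theorem exists_starAlgHom_of_partialRep (G : Type*) [Group G] (J : Type*)
    (A : Type*) [CStarAlgebra A] (π : G → A) (P : J → A)
    (hπe : π 1 = 1)
    (hπinv : ∀ g : G, π g⁻¹ = star (π g))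
    (hπmul : ∀ g h : G, π g * π h * π h⁻¹ = π (g * h) * π h⁻¹)
    (hP : ∀ i : J, star (P i) = P i ∧ P i * P i = P i)
    (hcomm₁ : ∀ (r s : G) (j : J),
      Commute (π r * star (π r)) (π s * P j * star (π s)))
    (hcomm₂ : ∀ (r s : G) (i j : J),
      Commute (π r * P i * star (π r)) (π s * P j * star (π s))) :
    ∃ φ : C(XG G J, ℂ) →⋆ₐ[ℂ] A,
      (∀ (r : G) (i : J), φ (chiG (r, some i)) = π r * P i * star (π r)) ∧
      (∀ r : G, φ (chiG (r, none)) = π r * star (π r)) := by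
  have hπ : IsPartialRepresentation π := ⟨hπe, hπinv, hπmul⟩
  have hPπ : ∀ r i, Commute (star (π r) * π r) (P i) := fun r i => by
    simpa [hπe, hπinv] using hcomm₁ r⁻¹ 1 i
  obtain ⟨φ, hφ⟩ := exists_starAlgHom_coordIndicator_of_commute
    (hπ.isStarProjection_conjProjection (fun i => ⟨(hP i).2, (hP i).1⟩) hPπ)
    (hπ.commute_conjProjection hcomm₁ hcomm₂)
    (hπ.orderCompatiblePoints_conjProjection_subset P)
  -- `chiG` is definitionally `coordIndicator (XG G J)`.
  exact ⟨φ, fun r i => hφ (r, some i), fun r => hφ (r, none)⟩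
end

section
/- Let A be a unital C*-algebra, π : G → A a partial representation, {P_i}_{i ∈ J} projections in A such that π(r)π(r)* commutes with π(s)P_jπ(s)* and π(r)P_iπ(r)* commutes with π(s)P_jπ(s)* for all r, s ∈ G and i, j ∈ J, and let φ : C(X_G, ℂ) → A be a unital *-homomorphism with φ(1_{(r,i)}) = π(r) P_i π(r)* for i ∈ J and φ(1_{(r,0)}) = π(r) π(r)* for all r ∈ G. Then the pair (φ, π) is covariant: for every t ∈ G and every f ∈ C(X_G, ℂ) vanishing off X_{t⁻¹}, one has φ(α_t(f)) = π(t) φ(f) π(t)*. -/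
/-- The translate `tξ = { (t r, i) : (r, i) ∈ ξ }`: `(g, i) ∈ tξ` iff `(t⁻¹ g, i) ∈ ξ`. -/
def act {G : Type*} [Group G] {J : Type*} (t : G) (ξ : (G × Option J) → Bool) :
    (G × Option J) → Bool :=
  fun x => ξ (t⁻¹ * x.1, x.2)

/-- If `ξ ∈ X_G` and `(t, 0) ∈ ξ`, then `t⁻¹ξ ∈ X_G`. -/
theorem act_inv_mem {G : Type*} [Group G] {J : Type*} {t : G}
    {ξ : (G × Option J) → Bool} (hξ : ξ ∈ XG G J) (h : ξ (t, none) = true) :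
    act t⁻¹ ξ ∈ XG G J := by
  constructor
  · show ξ (t⁻¹⁻¹ * 1, none) = true
    rw [inv_inv, mul_one]; exact h
  · intro r i hri
    exact hξ.2 _ _ hri

/-- For `t ∈ G` and `f ∈ C(X_G, ℂ)`, the function `α_t(f) : X_G → ℂ` which is equal to
`f ∘ θ_{t⁻¹}` on `X_t = { ξ ∈ X_G : (t,0) ∈ ξ }` and `0` off `X_t`. -/
noncomputable def alphaMap {G : Type*} [Group G] {J : Type*} (t : G)
    (f : C(XG G J, ℂ)) : XG G J → ℂ :=
  fun ξ => if h : (ξ : (G × Option J) → Bool) (t, none) = true then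
    f ⟨act t⁻¹ (ξ : (G × Option J) → Bool), act_inv_mem ξ.2 h⟩ else 0

open scoped CStarAlgebra

section Conjugation

variable {R B A : Type*} [CommSemiring R]
  [NonUnitalNonAssocSemiring B] [Module R B] [Star B]
  [NonUnitalSemiring A] [StarRing A] [Module R A] [IsScalarTower R A A] [SMulCommClass R A A]

def NonUnitalStarAlgHom.conjBy (ψ : B →⋆ₙₐ[R] A) (v : A) (hv : v * star v * v = v)
    (hcomm : ∀ b, Commute (star v * v) (ψ b)) : B →⋆ₙₐ[R] A where
  toFun b := v * ψ b * star v
  map_smul' c b := by simp only [map_smul, mul_smul_comm, smul_mul_assoc, MonoidHom.id_apply]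
  map_zero' := by simp
  map_add' x y := by simp only [map_add, mul_add, add_mul]
  map_mul' x y := by
    calc v * ψ (x * y) * star v = (v * star v * v) * (ψ x * ψ y) * star v := by rw [hv, map_mul]
      _ = v * (star v * v * ψ x) * ψ y * star v := by simp only [mul_assoc]
      _ = v * (ψ x * (star v * v)) * ψ y * star v := by rw [(hcomm x).eq]
      _ = v * ψ x * star v * (v * ψ y * star v) := by simp only [mul_assoc]
  map_star' b := by simp only [star_mul, star_star, map_star, mul_assoc]

@[simp]
lemma NonUnitalStarAlgHom.conjBy_apply (ψ : B →⋆ₙₐ[R] A) (v : A) (hv : v * star v * v = v)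
    (hcomm : ∀ b, Commute (star v * v) (ψ b)) (b : B) :
    ψ.conjBy v hv hcomm b = v * ψ b * star v := rfl

end Conjugation

lemma IsStarProjection.mul_star_mul_self {R : Type*} [Mul R] [Star R] {p : R}
    (hp : IsStarProjection p) : p * star p * p = p := by
  rw [hp.isSelfAdjoint.star_eq, hp.isIdempotentElem.eq, hp.isIdempotentElem.eq]

theorem ContinuousMap.nonUnitalStarAlgHom_ext_of_separatesPoints {𝕜 X A : Type*} [RCLike 𝕜]
    [TopologicalSpace X] [CompactSpace X] [TopologicalSpace A] [T2Space A]
    [Semiring A] [StarRing A] [Algebra 𝕜 A]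
    {S : Set C(X, 𝕜)} (hS₁ : 1 ∈ S) (hS : (StarAlgebra.adjoin 𝕜 S).SeparatesPoints)
    {ψ₁ ψ₂ : C(X, 𝕜) →⋆ₙₐ[𝕜] A} (hψ₁ : Continuous ψ₁) (hψ₂ : Continuous ψ₂)
    (h : Set.EqOn ψ₁ ψ₂ S) : ψ₁ = ψ₂ := by
  let E := (NonUnitalStarAlgHom.equalizer ψ₁ ψ₂).toStarSubalgebra (h hS₁)
  have hE : IsClosed (E : Set C(X, 𝕜)) := isClosed_eq hψ₁ hψ₂
  have hdense := ContinuousMap.starSubalgebra_topologicalClosure_eq_top_of_separatesPoints _ hS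
  ext f
  have hf : f ∈ (StarAlgebra.adjoin 𝕜 S).topologicalClosure := hdense ▸ trivial
  exact StarSubalgebra.topologicalClosure_minimal (StarAlgebra.adjoin_le h) hE hf

section PartialRepresentation

variable {G A : Type*} [Group G] [Monoid A] [StarMul A] {π : G → A}

lemma mul_eq_mul_star_mul (hπinv : ∀ g, π g⁻¹ = star (π g))
    (hπmul : ∀ g h, π g * π h * π h⁻¹ = π (g * h) * π h⁻¹) (s r : G) :
    π s * π r = π s * star (π s) * π (s * r) := by
  have h := congrArg star (hπmul (s * r)⁻¹ s)
  simp only [star_mul, ← hπinv, inv_inv, mul_inv_rev, inv_mul_cancel_left] at h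
  rw [← hπinv, ← h, mul_assoc]

lemma mul_star_mul_self (hπe : π 1 = 1) (hπinv : ∀ g, π g⁻¹ = star (π g))
    (hπmul : ∀ g h, π g * π h * π h⁻¹ = π (g * h) * π h⁻¹) (s : G) :
    π s * star (π s) * π s = π s := by
  simpa [hπe] using (mul_eq_mul_star_mul hπinv hπmul s 1).symm

end PartialRepresentation

section XG

variable {G : Type*} [Group G] {J : Type*}

lemma isClosed_XG : IsClosed (XG G J) := by
  simp only [XG, Set.ofPred_and, Set.ofPred_forall]
  refine .inter (isClosed_eq (continuous_apply _) continuous_const)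
    (isClosed_iInter fun r => isClosed_iInter fun i => ?_)
  have hcont : Continuous fun ξ : G × Option J → Bool => (ξ (r, i), ξ (r, none)) := by fun_prop
  exact (isClosed_discrete {p : Bool × Bool | p.1 = true → p.2 = true}).preimage hcont

instance : CompactSpace (XG G J) :=
  isCompact_iff_compactSpace.mp isClosed_XG.isCompact

/-- `θ_{t⁻¹}` on `X_t`, extended continuously to `X_G` by sending every `ξ ∉ X_t` to the
full set `G × I`. -/
def shift (t : G) : C(XG G J, XG G J) where
  toFun ξ := ⟨fun x => ξ.1 (t * x.1, x.2) || !ξ.1 (t, none), by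
    refine ⟨by simp, fun r i h => ?_⟩
    simp only [Bool.or_eq_true, Bool.not_eq_eq_eq_not, Bool.not_true] at h ⊢
    exact h.imp_left (ξ.2.2 _ _)⟩
  continuous_toFun := by
    refine (continuous_pi fun x => ?_).subtype_mk _
    have hcont : Continuous fun ξ : XG G J => (ξ.1 (t * x.1, x.2), ξ.1 (t, none)) :=
      ((continuous_apply _).prodMk (continuous_apply _)).comp continuous_subtype_val
    exact (continuous_of_discreteTopology (f := fun p : Bool × Bool => p.1 || !p.2)).comp hcont

lemma shift_apply_of_mem {t : G} {ξ : XG G J} (h : ξ.1 (t, none) = true) :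
    shift t ξ = ⟨act t⁻¹ ξ.1, act_inv_mem ξ.2 h⟩ := by
  ext x
  simp [shift, act, h]

lemma chiG_one_none : chiG ((1 : G), (none : Option J)) = 1 := by
  ext ξ
  simp [chiG, ξ.2.1]

lemma isStarProjection_chiG (x : G × Option J) : IsStarProjection (chiG x) where
  isIdempotentElem := by ext ξ; by_cases h : ξ.1 x = true <;> simp [chiG, h]
  isSelfAdjoint := by ext ξ; by_cases h : ξ.1 x = true <;> simp [chiG, h]

lemma separatesPoints_adjoin_range_chiG :
    (StarAlgebra.adjoin ℂ (Set.range (chiG : G × Option J → C(XG G J, ℂ)))).SeparatesPoints := by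
  intro ξ η hne
  obtain ⟨x, hx⟩ := Function.ne_iff.mp (Subtype.coe_ne_coe.mpr hne)
  refine ⟨_, ⟨chiG x, StarAlgebra.subset_adjoin ℂ _ ⟨x, rfl⟩, rfl⟩, ?_⟩
  cases hξ : ξ.1 x <;> cases hη : η.1 x <;> simp_all [chiG]

noncomputable def alpha (t : G) : C(XG G J, ℂ) →⋆ₙₐ[ℂ] C(XG G J, ℂ) :=
  (ContinuousMap.compStarAlgHom' ℂ ℂ (shift (J := J) t) : C(XG G J, ℂ) →⋆ₙₐ[ℂ] C(XG G J, ℂ)).conjBy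
    (chiG (t, none)) (isStarProjection_chiG _).mul_star_mul_self fun _ => Commute.all _ _

lemma alpha_apply (t : G) (f : C(XG G J, ℂ)) :
    alpha t f = chiG (t, none) * f.comp (shift t) * star (chiG (t, none)) := rfl

lemma coe_alpha (t : G) (f : C(XG G J, ℂ)) : ⇑(alpha t f) = alphaMap t f := by
  funext ξ
  by_cases h : ξ.1 (t, none) = true
  · simp [alpha_apply, alphaMap, chiG, h, shift_apply_of_mem h]
  · simp [alpha_apply, alphaMap, chiG, h]

lemma alpha_chiG (t : G) (x : G × Option J) :
    alpha t (chiG x) = chiG (t, none) * chiG (t * x.1, x.2) * star (chiG (t, none)) := by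
  ext ξ
  by_cases h : ξ.1 (t, none) = true
  · simp [alpha_apply, chiG, h, shift_apply_of_mem h, act]
  · simp [alpha_apply, chiG, h]

end XG

lemma conj_map_chiG {G J A : Type*} [Group G] [Semiring A] [StarRing A] [Algebra ℂ A]
    {π : G → A} (P : J → A) (hπinv : ∀ g, π g⁻¹ = star (π g))
    (hπmul : ∀ g h, π g * π h * π h⁻¹ = π (g * h) * π h⁻¹) (φ : C(XG G J, ℂ) →⋆ₐ[ℂ] A)
    (hφ : ∀ x : G × Option J, φ (chiG x) = π x.1 * x.2.elim 1 P * star (π x.1))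
    (t : G) (x : G × Option J) :
    π t * φ (chiG x) * star (π t) =
      φ (chiG (t, none)) * φ (chiG (t * x.1, x.2)) * star (φ (chiG (t, none))) := by
  simp only [hφ, Option.elim_none, mul_one]
  calc π t * (π x.1 * x.2.elim 1 P * star (π x.1)) * star (π t)
      = π t * π x.1 * x.2.elim 1 P * star (π t * π x.1) := by simp only [star_mul, mul_assoc]
    _ = π t * star (π t) * π (t * x.1) * x.2.elim 1 P *
          star (π t * star (π t) * π (t * x.1)) := by
      rw [mul_eq_mul_star_mul hπinv hπmul]
    _ = _ := by simp only [star_mul, star_star, mul_assoc]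

theorem covariant_pair_general (G : Type*) [Group G] (J : Type*)
    (A : Type*) [CStarAlgebra A] (π : G → A) (P : J → A)
    (hπe : π 1 = 1)
    (hπinv : ∀ g : G, π g⁻¹ = star (π g))
    (hπmul : ∀ g h : G, π g * π h * π h⁻¹ = π (g * h) * π h⁻¹)
    (φ : C(XG G J, ℂ) →⋆ₐ[ℂ] A)
    (hφ₁ : ∀ (r : G) (i : J), φ (chiG (r, some i)) = π r * P i * star (π r))
    (hφ₂ : ∀ r : G, φ (chiG (r, none)) = π r * star (π r)) :
    ∀ (t : G) (f : C(XG G J, ℂ)),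
      (∀ ξ : XG G J, (ξ : (G × Option J) → Bool) (t⁻¹, none) = false → f ξ = 0) →
      ∀ g : C(XG G J, ℂ), ⇑g = alphaMap t f → φ g = π t * φ f * star (π t) := by
  intro t f _ g hg
  have hφ : ∀ x : G × Option J, φ (chiG x) = π x.1 * x.2.elim 1 P * star (π x.1) := by
    rintro ⟨r, _ | i⟩ <;> simp [hφ₁, hφ₂]
  have hsource : star (π t) * π t = φ (chiG (t⁻¹, none)) := by rw [hφ₂, hπinv, star_star]
  let Ψ := (φ : C(XG G J, ℂ) →⋆ₙₐ[ℂ] A).conjBy (π t) (mul_star_mul_self hπe hπinv hπmul t)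
    fun _ => hsource ▸ (Commute.all _ _).map φ
  have hΨ : (φ : C(XG G J, ℂ) →⋆ₙₐ[ℂ] A).comp (alpha t) = Ψ := by
    refine ContinuousMap.nonUnitalStarAlgHom_ext_of_separatesPoints (S := Set.range chiG)
      ⟨(1, none), chiG_one_none⟩ separatesPoints_adjoin_range_chiG
      (map_continuous _) (map_continuous _) ?_
    rintro _ ⟨x, rfl⟩
    simp [Ψ, alpha_chiG, conj_map_chiG P hπinv hπmul φ hφ, map_star]
  rw [show g = alpha t f from DFunLike.coe_injective (hg.trans (coe_alpha t f).symm)]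
  exact DFunLike.congr_fun hΨ f

/-- Let `A` be a unital C*-algebra, `π : G → A` a partial representation, `{P_i}_{i ∈ J}`
projections in `A` with the stated commutation properties, and `φ : C(X_G, ℂ) → A` a
unital *-homomorphism with `φ(1_{(r,i)}) = π(r)P_iπ(r)*` for `i ∈ J` and
`φ(1_{(r,0)}) = π(r)π(r)*` for all `r ∈ G`.  Then the pair `(φ, π)` is covariant: for
every `t ∈ G` and every `f ∈ C(X_G, ℂ)` vanishing off `X_{t⁻¹}`, one has
`φ(α_t(f)) = π(t) φ(f) π(t)*`. -/
theorem covariant_pair (G : Type*) [Group G] (J : Type*)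
    (A : Type*) [CStarAlgebra A] (π : G → A) (P : J → A)
    (hπe : π 1 = 1)
    (hπinv : ∀ g : G, π g⁻¹ = star (π g))
    (hπmul : ∀ g h : G, π g * π h * π h⁻¹ = π (g * h) * π h⁻¹)
    (hP : ∀ i : J, star (P i) = P i ∧ P i * P i = P i)
    (hcomm₁ : ∀ (r s : G) (j : J),
      Commute (π r * star (π r)) (π s * P j * star (π s)))
    (hcomm₂ : ∀ (r s : G) (i j : J),
      Commute (π r * P i * star (π r)) (π s * P j * star (π s)))
    (φ : C(XG G J, ℂ) →⋆ₐ[ℂ] A)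
    (hφ₁ : ∀ (r : G) (i : J), φ (chiG (r, some i)) = π r * P i * star (π r))
    (hφ₂ : ∀ r : G, φ (chiG (r, none)) = π r * star (π r)) :
    ∀ (t : G) (f : C(XG G J, ℂ)),
      (∀ ξ : XG G J, (ξ : (G × Option J) → Bool) (t⁻¹, none) = false → f ξ = 0) →
      ∀ g : C(XG G J, ℂ), ⇑g = alphaMap t f → φ g = π t * φ f * star (π t) :=
  covariant_pair_general G J A π P hπe hπinv hπmul φ hφ₁ hφ₂
end

section
/- For all elements c, d of the multiplicative semigroup I generated by { S_a : a ∈ E¹ } ∪ { S_a* : a ∈ E¹ }, the elements c c* and d d* commute. -/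
/-!
Let `D` consist of `0`, the vertex projections `Q_v` and the path projections `S_μ S_μ*`
(the empty path giving `1`). Conjugation by a generator maps `D` into itself: `S_a (S_μ S_μ*) S_a*`
is the projection of the path `aμ`, while `S_a* (S_μ S_μ*) S_a` strips the first edge off `μ` or
vanishes. Hence `c p c* ∈ D` for every `c ∈ I` and `p ∈ D`, and `c c* = c 1 c* ∈ D`.
The elements of `D` commute pairwise: two path projections starting with different edges are
orthogonal, and a common first edge `a` is peeled off using that `S_a* S_a = Q_{s(a)}` commutes
with every path projection.
-/

theorem mul_star_mul_self_of_isIdempotentElem {R : Type*} [NonUnitalNormedRing R] [StarRing R]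
    [CStarRing R] {x : R} (hx : IsIdempotentElem (star x * x)) : x * (star x * x) = x := by
  have hzero : star (x * (star x * x) - x) * (x * (star x * x) - x) = 0 := by
    calc star (x * (star x * x) - x) * (x * (star x * x) - x)
        = (star x * x) * (star x * x) * (star x * x) - (star x * x) * (star x * x)
          - (star x * x) * (star x * x) + star x * x := by
          simp only [star_sub, star_mul, star_star]; noncomm_ring
      _ = 0 := by simp only [hx.eq]; abel
  exact sub_eq_zero.mp ((CStarRing.star_mul_self_eq_zero_iff _).mp hzero)

theorem Commute.mul_mul_mul_of_commute_mul {M : Type*} [Semigroup M] {s t x y : M}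
    (hxy : Commute x y) (hx : Commute (t * s) x) (hy : Commute (t * s) y) :
    Commute (s * x * t) (s * y * t) := by
  have hmid : x * (t * s) * y = y * (t * s) * x := by
    rw [hx.symm.eq, mul_assoc, hxy.eq, ← mul_assoc, hy.eq, mul_assoc]
  calc s * x * t * (s * y * t) = s * (x * (t * s) * y) * t := by simp only [mul_assoc]
    _ = s * (y * (t * s) * x) * t := by rw [hmid]
    _ = s * y * t * (s * x * t) := by simp only [mul_assoc]

section CuntzKrieger

variable {V E A : Type*}

structure IsCuntzKriegerFamily [Mul A] [Zero A] [Star A]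
    (r s : E → V) (Q : V → A) (S : E → A) : Prop where
  star_Q : ∀ v, star (Q v) = Q v
  Q_mul_Q_self : ∀ v, Q v * Q v = Q v
  Q_mul_Q_of_ne : ∀ v w, v ≠ w → Q v * Q w = 0
  star_S_mul_S_of_ne : ∀ a b, a ≠ b → star (S a) * S b = 0
  star_S_mul_S : ∀ a, star (S a) * S a = Q (s a)
  Q_range_mul_S : ∀ a, Q (r a) * S a = S a

section Semiring

variable [Semiring A] [StarRing A] {r s : E → V} {Q : V → A} {S : E → A}

def pathProd (S : E → A) (μ : List E) : A := (μ.map S).prod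

def pathProj (S : E → A) (μ : List E) : A := pathProd S μ * star (pathProd S μ)

@[simp]
theorem pathProj_nil : pathProj S [] = 1 := by
  simp [pathProj, pathProd]

theorem pathProj_cons (a : E) (μ : List E) :
    pathProj S (a :: μ) = S a * pathProj S μ * star (S a) := by
  simp only [pathProj, pathProd, List.map_cons, List.prod_cons, star_mul, mul_assoc]

def diagonalProjections (Q : V → A) (S : E → A) : Set A :=
  insert 0 (Set.range Q ∪ Set.range (pathProj S))

theorem zero_mem_diagonalProjections : (0 : A) ∈ diagonalProjections Q S :=
  Set.mem_insert _ _

theorem Q_mem_diagonalProjections (v : V) : Q v ∈ diagonalProjections Q S :=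
  Or.inr (Or.inl ⟨v, rfl⟩)

theorem pathProj_mem_diagonalProjections (μ : List E) :
    pathProj S μ ∈ diagonalProjections Q S :=
  Or.inr (Or.inr ⟨μ, rfl⟩)

namespace IsCuntzKriegerFamily

theorem Q_mul_S_of_ne (h : IsCuntzKriegerFamily r s Q S) {v : V} {a : E} (hv : v ≠ r a) :
    Q v * S a = 0 := by
  rw [← h.Q_range_mul_S a, ← mul_assoc, h.Q_mul_Q_of_ne v (r a) hv, zero_mul]

theorem star_S_mul_Q_of_ne (h : IsCuntzKriegerFamily r s Q S) {v : V} {a : E} (hv : v ≠ r a) :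
    star (S a) * Q v = 0 := by
  simpa only [star_mul, h.star_Q, star_zero] using congrArg star (h.Q_mul_S_of_ne hv)

theorem star_S_mul_Q_range (h : IsCuntzKriegerFamily r s Q S) (a : E) :
    star (S a) * Q (r a) = star (S a) := by
  simpa only [star_mul, h.star_Q] using congrArg star (h.Q_range_mul_S a)

theorem commute_Q_pathProj (h : IsCuntzKriegerFamily r s Q S) (v : V) (μ : List E) :
    Commute (Q v) (pathProj S μ) := by
  cases μ with
  | nil => simp
  | cons a μ =>
    rw [pathProj_cons]
    by_cases hv : v = r a
    · subst hv
      calc Q (r a) * (S a * pathProj S μ * star (S a)) = S a * pathProj S μ * star (S a) := by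
            rw [← mul_assoc, ← mul_assoc, h.Q_range_mul_S]
        _ = S a * pathProj S μ * star (S a) * Q (r a) := by
            rw [mul_assoc _ (star _), h.star_S_mul_Q_range]
    · rw [Commute, SemiconjBy, ← mul_assoc, ← mul_assoc, h.Q_mul_S_of_ne hv, mul_assoc _ (star _),
        h.star_S_mul_Q_of_ne hv]
      simp

theorem Q_mul_pathProj_mem (h : IsCuntzKriegerFamily r s Q S) (v : V) (μ : List E) :
    Q v * pathProj S μ ∈ diagonalProjections Q S := by
  cases μ with
  | nil => simpa using Q_mem_diagonalProjections v
  | cons a μ =>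
    by_cases hv : v = r a
    · subst hv
      rw [pathProj_cons, ← mul_assoc, ← mul_assoc, h.Q_range_mul_S, ← pathProj_cons]
      exact pathProj_mem_diagonalProjections _
    · rw [pathProj_cons, ← mul_assoc, ← mul_assoc, h.Q_mul_S_of_ne hv, zero_mul, zero_mul]
      exact zero_mem_diagonalProjections

theorem pathProj_cons_mul_pathProj_cons_of_ne (h : IsCuntzKriegerFamily r s Q S) {a b : E}
    (hab : a ≠ b) (μ ν : List E) : pathProj S (a :: μ) * pathProj S (b :: ν) = 0 := by
  simp only [pathProj_cons, mul_assoc]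
  rw [← mul_assoc (star (S a)), h.star_S_mul_S_of_ne a b hab]
  simp

theorem commute_pathProj (h : IsCuntzKriegerFamily r s Q S) :
    ∀ μ ν : List E, Commute (pathProj S μ) (pathProj S ν)
  | [], ν => by simp
  | μ, [] => by simp
  | a :: μ, b :: ν => by
    by_cases hab : a = b
    · subst hab
      rw [pathProj_cons, pathProj_cons]
      refine (h.commute_pathProj μ ν).mul_mul_mul_of_commute_mul ?_ ?_ <;>
        rw [h.star_S_mul_S] <;> exact h.commute_Q_pathProj _ _
    · rw [Commute, SemiconjBy, h.pathProj_cons_mul_pathProj_cons_of_ne hab,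
        h.pathProj_cons_mul_pathProj_cons_of_ne (Ne.symm hab)]

theorem commute_Q (h : IsCuntzKriegerFamily r s Q S) (v w : V) : Commute (Q v) (Q w) := by
  by_cases hvw : v = w
  · rw [hvw]
  · rw [Commute, SemiconjBy, h.Q_mul_Q_of_ne v w hvw, h.Q_mul_Q_of_ne w v (Ne.symm hvw)]

theorem commute_of_mem_diagonalProjections (h : IsCuntzKriegerFamily r s Q S) {p q : A}
    (hp : p ∈ diagonalProjections Q S) (hq : q ∈ diagonalProjections Q S) : Commute p q := by
  rcases hp with rfl | ⟨v, rfl⟩ | ⟨μ, rfl⟩ <;> rcases hq with rfl | ⟨w, rfl⟩ | ⟨ν, rfl⟩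
  all_goals first
    | exact Commute.zero_left _
    | exact Commute.zero_right _
    | exact h.commute_Q_pathProj _ _
    | exact (h.commute_Q_pathProj _ _).symm
    | exact h.commute_Q _ _
    | exact h.commute_pathProj _ _

theorem star_S_mul_mul_S_mem (h : IsCuntzKriegerFamily r s Q S) (a : E) {p : A}
    (hp : p ∈ diagonalProjections Q S) : star (S a) * p * S a ∈ diagonalProjections Q S := by
  rcases hp with rfl | ⟨v, rfl⟩ | ⟨_ | ⟨b, μ⟩, rfl⟩
  · simpa using zero_mem_diagonalProjections
  · by_cases hv : v = r a
    · subst hv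
      rw [h.star_S_mul_Q_range, h.star_S_mul_S]
      exact Q_mem_diagonalProjections _
    · rw [h.star_S_mul_Q_of_ne hv, zero_mul]
      exact zero_mem_diagonalProjections
  · rw [pathProj_nil, mul_one, h.star_S_mul_S]
    exact Q_mem_diagonalProjections _
  · by_cases hab : a = b
    · subst hab
      have hconj : star (S a) * pathProj S (a :: μ) * S a = Q (s a) * pathProj S μ * Q (s a) := by
        simp only [pathProj_cons, ← h.star_S_mul_S, mul_assoc]
      rw [hconj, mul_assoc, ← (h.commute_Q_pathProj _ μ).eq, ← mul_assoc, h.Q_mul_Q_self]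
      exact h.Q_mul_pathProj_mem _ _
    · rw [pathProj_cons, ← mul_assoc, ← mul_assoc, h.star_S_mul_S_of_ne a b hab]
      simpa using zero_mem_diagonalProjections

end IsCuntzKriegerFamily

end Semiring

namespace IsCuntzKriegerFamily

variable [NormedRing A] [StarRing A] [CStarRing A] {r s : E → V} {Q : V → A} {S : E → A}

theorem S_mul_Q_source (h : IsCuntzKriegerFamily r s Q S) (a : E) : S a * Q (s a) = S a := by
  rw [← h.star_S_mul_S]
  exact mul_star_mul_self_of_isIdempotentElem
    (by rw [IsIdempotentElem, h.star_S_mul_S, h.Q_mul_Q_self])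

theorem S_mul_Q_of_ne (h : IsCuntzKriegerFamily r s Q S) {a : E} {v : V} (hv : s a ≠ v) :
    S a * Q v = 0 := by
  rw [← h.S_mul_Q_source, mul_assoc, h.Q_mul_Q_of_ne _ _ hv, mul_zero]

theorem S_mul_mul_star_S_mem (h : IsCuntzKriegerFamily r s Q S) (a : E) {p : A}
    (hp : p ∈ diagonalProjections Q S) : S a * p * star (S a) ∈ diagonalProjections Q S := by
  rcases hp with rfl | ⟨v, rfl⟩ | ⟨μ, rfl⟩
  · simpa using zero_mem_diagonalProjections
  · by_cases hv : s a = v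
    · subst hv
      rw [h.S_mul_Q_source]
      simpa [pathProj_cons] using pathProj_mem_diagonalProjections (Q := Q) [a]
    · rw [h.S_mul_Q_of_ne hv, zero_mul]
      exact zero_mem_diagonalProjections
  · rw [← pathProj_cons]
    exact pathProj_mem_diagonalProjections _

theorem mul_mul_star_mem_of_mem_closure (h : IsCuntzKriegerFamily r s Q S) {c : A}
    (hc : c ∈ Subsemigroup.closure {x : A | ∃ a : E, x = S a ∨ x = star (S a)}) {p : A}
    (hp : p ∈ diagonalProjections Q S) : c * p * star c ∈ diagonalProjections Q S := by
  induction hc using Subsemigroup.closure_induction generalizing p with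
  | mem x hx =>
    obtain ⟨a, rfl | rfl⟩ := hx
    · exact h.S_mul_mul_star_S_mem a hp
    · rw [star_star]
      exact h.star_S_mul_mul_S_mem a hp
  | mul x y _ _ hx hy =>
    have hassoc : x * y * p * star (x * y) = x * (y * p * star y) * star x := by
      simp only [star_mul, mul_assoc]
    rw [hassoc]
    exact hx (hy hp)

end IsCuntzKriegerFamily

end CuntzKrieger

/-- Let `E = (E⁰, E¹, r, s)` be a directed graph and let `{Q_v}, {S_a}` be a
Cuntz–Krieger `E`-family in a C*-algebra `A`: the `Q_v` are mutually orthogonal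
projections, `S_a* S_b = 0` for `a ≠ b`, `S_a* S_a = Q_{s(a)}`, and
`S_a S_a* ≤ Q_{r(a)}` (equivalently `Q_{r(a)} S_a = S_a`).  Then for all elements
`c, d` of the multiplicative semigroup generated by `{ S_a } ∪ { S_a* }`, the
elements `c c*` and `d d*` commute. -/
theorem mem_semigroup_range_projections_commute
    (V E : Type*) (r s : E → V) (A : Type*) [CStarAlgebra A]
    (Q : V → A) (S : E → A)
    (hQsa : ∀ v : V, star (Q v) = Q v)
    (hQproj : ∀ v : V, Q v * Q v = Q v)
    (hQorth : ∀ v w : V, v ≠ w → Q v * Q w = 0)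
    (hSorth : ∀ a b : E, a ≠ b → star (S a) * S b = 0)
    (hSQ : ∀ a : E, star (S a) * S a = Q (s a))
    (hQS : ∀ a : E, Q (r a) * S a = S a) :
    ∀ c ∈ Subsemigroup.closure {x : A | ∃ a : E, x = S a ∨ x = star (S a)},
      ∀ d ∈ Subsemigroup.closure {x : A | ∃ a : E, x = S a ∨ x = star (S a)},
        Commute (c * star c) (d * star d) := by
  have hCK : IsCuntzKriegerFamily r s Q S := ⟨hQsa, hQproj, hQorth, hSorth, hSQ, hQS⟩
  have hdiag : ∀ c ∈ Subsemigroup.closure {x : A | ∃ a : E, x = S a ∨ x = star (S a)},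
      c * star c ∈ diagonalProjections Q S := fun c hc => by
    simpa using hCK.mul_mul_star_mem_of_mem_closure hc (pathProj_mem_diagonalProjections [])
  intro c hc d hd
  exact hCK.commute_of_mem_diagonalProjections (hdiag c hc) (hdiag d hd)
end

section
/- For every a ∈ E¹ and every element d of the multiplicative semigroup I generated by { S_a : a ∈ E¹ } ∪ { S_a* : a ∈ E¹ }, both S_a S_a* and S_a* S_a commute with d d*. -/
/-!
Call `0`, `1`, the `Q v` and everything obtained from them by repeated conjugation
`c ↦ S a c S a*` path projections: these are `0` and the `S_μ Q_v S_μ*`, `S_μ S_μ*` for paths `μ`.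
Conjugating a path projection by `S a*` gives again one: `S a* S b c S b* S a` vanishes unless
`a = b`, when it is `Q (s a) c Q (s a)`, and `Q w` fixes or kills each `S b x S b*` from either
side. Hence `c ↦ d c d*` preserves path projections for every `d` in the semigroup, so
`d d* = d 1 d*` is one. By the same relations every path projection commutes with each `Q w`,
and then also with each `S a S a*`.
-/

namespace CuntzKrieger

variable {V E A : Type*} [Semiring A] [StarRing A]

structure IsFamily (r s : E → V) (Q : V → A) (S : E → A) : Prop where
  star_Q : ∀ v, star (Q v) = Q v
  Q_mul_self : ∀ v, Q v * Q v = Q v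
  Q_mul_Q_of_ne : ∀ v w, v ≠ w → Q v * Q w = 0
  star_S_mul_S_of_ne : ∀ a b, a ≠ b → star (S a) * S b = 0
  star_S_mul_S : ∀ a, star (S a) * S a = Q (s a)
  Q_range_mul_S : ∀ a, Q (r a) * S a = S a

inductive IsPathProj (Q : V → A) (S : E → A) : A → Prop
  | zero : IsPathProj Q S 0
  | one : IsPathProj Q S 1
  | vertex (v : V) : IsPathProj Q S (Q v)
  | conj (a : E) {c : A} : IsPathProj Q S c → IsPathProj Q S (S a * c * star (S a))

namespace IsFamily

variable {r s : E → V} {Q : V → A} {S : E → A}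

theorem Q_mul_S [DecidableEq V] (h : IsFamily r s Q S) (w : V) (a : E) :
    Q w * S a = if w = r a then S a else 0 := by
  split_ifs with hw
  · rw [hw, h.Q_range_mul_S]
  · rw [← h.Q_range_mul_S a, ← mul_assoc, h.Q_mul_Q_of_ne _ _ hw, zero_mul]

theorem star_S_mul_Q [DecidableEq V] (h : IsFamily r s Q S) (a : E) (w : V) :
    star (S a) * Q w = if w = r a then star (S a) else 0 := by
  rw [← h.star_Q w, ← star_mul, h.Q_mul_S]
  split_ifs <;> simp

theorem Q_mul_conj_S [DecidableEq V] (h : IsFamily r s Q S) (w : V) (a : E) (x : A) :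
    Q w * (S a * x * star (S a)) = if w = r a then S a * x * star (S a) else 0 := by
  rw [← mul_assoc, ← mul_assoc, h.Q_mul_S]
  split_ifs <;> simp

theorem conj_S_mul_Q [DecidableEq V] (h : IsFamily r s Q S) (w : V) (a : E) (x : A) :
    S a * x * star (S a) * Q w = if w = r a then S a * x * star (S a) else 0 := by
  rw [mul_assoc, h.star_S_mul_Q]
  split_ifs <;> simp

theorem commute_Q_Q (h : IsFamily r s Q S) (v w : V) : Commute (Q v) (Q w) := by
  rcases eq_or_ne v w with rfl | hvw
  · rfl
  · rw [Commute, SemiconjBy, h.Q_mul_Q_of_ne _ _ hvw, h.Q_mul_Q_of_ne _ _ hvw.symm]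

theorem commute_Q_conj_S (h : IsFamily r s Q S) (w : V) (a : E) (x : A) :
    Commute (Q w) (S a * x * star (S a)) := by
  classical
  rw [Commute, SemiconjBy, h.Q_mul_conj_S, h.conj_S_mul_Q]

theorem commute_Q_of_isPathProj (h : IsFamily r s Q S) (w : V) {c : A}
    (hc : IsPathProj Q S c) : Commute (Q w) c := by
  cases hc with
  | zero => exact Commute.zero_right _
  | one => exact Commute.one_right _
  | vertex v => exact h.commute_Q_Q w v
  | conj a _ => exact h.commute_Q_conj_S w a _

theorem commute_S_mul_star_S_of_isPathProj (h : IsFamily r s Q S) (b : E) {c : A}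
    (hc : IsPathProj Q S c) : Commute (S b * star (S b)) c := by
  cases hc with
  | zero => exact Commute.zero_right _
  | one => exact Commute.one_right _
  | vertex v => simpa using (h.commute_Q_conj_S v b 1).symm
  | @conj a c hc =>
    rcases eq_or_ne b a with rfl | hba
    · have hQc := h.commute_Q_of_isPathProj (s b) hc
      calc S b * star (S b) * (S b * c * star (S b))
          = S b * (star (S b) * S b * c) * star (S b) := by noncomm_ring
        _ = S b * (c * (star (S b) * S b)) * star (S b) := by rw [h.star_S_mul_S, hQc.eq]
        _ = S b * c * star (S b) * (S b * star (S b)) := by noncomm_ring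
    · calc S b * star (S b) * (S a * c * star (S a))
          = S b * (star (S b) * S a) * c * star (S a) := by noncomm_ring
        _ = S a * c * (star (S a) * S b) * star (S b) := by
          rw [h.star_S_mul_S_of_ne _ _ hba, h.star_S_mul_S_of_ne _ _ hba.symm]; simp
        _ = S a * c * star (S a) * (S b * star (S b)) := by noncomm_ring

theorem isPathProj_Q_mul_mul_Q (h : IsFamily r s Q S) (w : V) {c : A}
    (hc : IsPathProj Q S c) : IsPathProj Q S (Q w * c * Q w) := by
  classical
  cases hc with
  | zero => simpa using IsPathProj.zero
  | one => simpa [h.Q_mul_self] using IsPathProj.vertex w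
  | vertex v =>
    rcases eq_or_ne w v with rfl | hwv
    · simpa [h.Q_mul_self] using IsPathProj.vertex w
    · simpa [h.Q_mul_Q_of_ne _ _ hwv] using IsPathProj.zero
  | conj a hc =>
    rw [h.Q_mul_conj_S]
    split_ifs with hw
    · rw [h.conj_S_mul_Q, if_pos hw]
      exact hc.conj a
    · simpa using IsPathProj.zero

theorem isPathProj_star_S_conj (h : IsFamily r s Q S) (a : E) {c : A}
    (hc : IsPathProj Q S c) : IsPathProj Q S (star (S a) * c * S a) := by
  classical
  cases hc with
  | zero => simpa using IsPathProj.zero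
  | one => simpa [h.star_S_mul_S] using IsPathProj.vertex (s a)
  | vertex v =>
    rw [h.star_S_mul_Q]
    split_ifs
    · simpa [h.star_S_mul_S] using IsPathProj.vertex (s a)
    · simpa using IsPathProj.zero
  | @conj b c hc =>
    rcases eq_or_ne a b with rfl | hab
    · have e : star (S a) * (S a * c * star (S a)) * S a
          = star (S a) * S a * c * (star (S a) * S a) := by noncomm_ring
      rw [e, h.star_S_mul_S]
      exact h.isPathProj_Q_mul_mul_Q (s a) hc
    · have e : star (S a) * (S b * c * star (S b)) * S a
          = star (S a) * S b * c * star (star (S a) * S b) := by simp [mul_assoc]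
      simpa [e, h.star_S_mul_S_of_ne _ _ hab] using IsPathProj.zero

theorem isPathProj_conj_of_mem_closure (h : IsFamily r s Q S) {d : A}
    (hd : d ∈ Subsemigroup.closure {x : A | ∃ a : E, x = S a ∨ x = star (S a)})
    {c : A} (hc : IsPathProj Q S c) : IsPathProj Q S (d * c * star d) := by
  induction hd using Subsemigroup.closure_induction generalizing c with
  | mem x hx =>
    obtain ⟨a, rfl | rfl⟩ := hx
    · exact hc.conj a
    · simpa using h.isPathProj_star_S_conj a hc
  | mul x y _ _ ihx ihy =>
    have e : x * y * c * star (x * y) = x * (y * c * star y) * star x := by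
      simp [mul_assoc]
    rw [e]
    exact ihx (ihy hc)

end IsFamily

end CuntzKrieger

open CuntzKrieger in
/-- Let `E = (E⁰, E¹, r, s)` be a directed graph and let `{Q_v}, {S_a}` be a
Cuntz–Krieger `E`-family in a C*-algebra `A`: the `Q_v` are mutually orthogonal
projections, `S_a* S_b = 0` for `a ≠ b`, `S_a* S_a = Q_{s(a)}`, and
`S_a S_a* ≤ Q_{r(a)}` (equivalently `Q_{r(a)} S_a = S_a`).  Then for every `a ∈ E¹`
and every element `d` of the multiplicative semigroup generated by
`{ S_a } ∪ { S_a* }`, both `S_a S_a*` and `S_a* S_a` commute with `d d*`. -/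
theorem edge_projections_commute_with_range_projections
    (V E : Type*) (r s : E → V) (A : Type*) [CStarAlgebra A]
    (Q : V → A) (S : E → A)
    (hQsa : ∀ v : V, star (Q v) = Q v)
    (hQproj : ∀ v : V, Q v * Q v = Q v)
    (hQorth : ∀ v w : V, v ≠ w → Q v * Q w = 0)
    (hSorth : ∀ a b : E, a ≠ b → star (S a) * S b = 0)
    (hSQ : ∀ a : E, star (S a) * S a = Q (s a))
    (hQS : ∀ a : E, Q (r a) * S a = S a) :
    ∀ a : E, ∀ d ∈ Subsemigroup.closure {x : A | ∃ a : E, x = S a ∨ x = star (S a)},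
      Commute (S a * star (S a)) (d * star d) ∧
      Commute (star (S a) * S a) (d * star d) := by
  intro a d hd
  have h : IsFamily r s Q S := ⟨hQsa, hQproj, hQorth, hSorth, hSQ, hQS⟩
  have hdd : IsPathProj Q S (d * star d) := by
    simpa using h.isPathProj_conj_of_mem_closure hd IsPathProj.one
  exact ⟨h.commute_S_mul_star_S_of_isPathProj a hdd,
    hSQ a ▸ h.commute_Q_of_isPathProj (s a) hdd⟩
end
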